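/- Let U, U* ∈ ℝ^{n×r} have orthonormal columns. Then the squared chordal Frobenius distance and squared projection distance satisfy: d_f²(U, U*) ≤ (1/2)‖UU^⊤ − U*U*^⊤‖_F² + (1/4)‖UU^⊤ − U*U*^⊤‖_F⁴, where d_f(U,U*) = min_{O∈O(r)} ‖U − U*O‖_F. -/

import Mathlib

/-!
Put `M = Uᵀ U*` and let `μᵢ` be the eigenvalues of the Gram matrix `MᵀM`; they lie in `[0, 1]`
because `1 - MᵀM = U*ᵀ (1 - UUᵀ) U*`. A polar decomposition `M = W √(MᵀM)` with `W` orthogonal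
exists because `‖Mx‖ = ‖√(MᵀM) x‖` for all `x`, so `√(MᵀM) x ↦ M x` is an isometry on a subspace,
which extends to the whole space. For `O = Wᵀ` this gives `‖U - U*O‖_F² = 2 ∑ (1 - √μᵢ)`, while
`‖UUᵀ - U*U*ᵀ‖_F² = 2 ∑ (1 - μᵢ)`. The claim then follows termwise from
`2 (1 - √μ) ≤ (1 - μ) + (1 - μ)²` together with `∑ aᵢ² ≤ (∑ aᵢ)²` for `aᵢ = 1 - μᵢ ≥ 0`.
-/

open Matrix

/-- Frobenius norm of a matrix. -/
noncomputable def frob {m n : ℕ} (A : Matrix (Fin m) (Fin n) ℝ) : ℝ :=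
  Real.sqrt (∑ i, ∑ j, A i j ^ 2)

/-- Chordal Frobenius distance `d_f(U, U*) = min_{O ∈ O(r)} ‖U − U*O‖_F`. -/
noncomputable def dfDist {n r : ℕ} (U Ustar : Matrix (Fin n) (Fin r) ℝ) : ℝ :=
  sInf { t | ∃ O : Matrix (Fin r) (Fin r) ℝ, Oᵀ * O = 1 ∧ t = frob (U - Ustar * O) }

namespace LinearMap
variable {𝕜 E V : Type*} [RCLike 𝕜] [NormedAddCommGroup V] [InnerProductSpace 𝕜 V]
  [FiniteDimensional 𝕜 V] [AddCommGroup E] [Module 𝕜 E]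

theorem exists_linearIsometry_comp_eq {f g : E →ₗ[𝕜] V} (h : ∀ x, ‖f x‖ = ‖g x‖) :
    ∃ W : V →ₗᵢ[𝕜] V, ∀ x, W (f x) = g x := by
  have hker : ker f ≤ ker g := fun x hx => by
    rw [mem_ker, ← norm_eq_zero, ← h x, norm_eq_zero]; exact hx
  let φ : range f →ₗ[𝕜] V := (ker f).liftQ g hker ∘ₗ f.quotKerEquivRange.symm.toLinearMap
  have hφ : ∀ x, φ ⟨f x, mem_range_self f x⟩ = g x := fun x => by
    simp [φ, quotKerEquivRange_symm_apply_image]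
  let L : range f →ₗᵢ[𝕜] V := ⟨φ, by rintro ⟨_, x, rfl⟩; rw [hφ]; exact (h x).symm⟩
  exact ⟨L.extend, fun x => (L.extend_apply ⟨f x, _⟩).trans (hφ x)⟩

end LinearMap

namespace ContinuousLinearMap
variable {𝕜 V : Type*} [RCLike 𝕜] [NormedAddCommGroup V] [InnerProductSpace 𝕜 V]
  [FiniteDimensional 𝕜 V] [CompleteSpace V]

theorem exists_mem_unitary_mul_eq_of_star_mul_self_eq {f g : V →L[𝕜] V}
    (h : star f * f = star g * g) : ∃ u ∈ unitary (V →L[𝕜] V), g = u * f := by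
  have hnorm : ∀ x, ‖f x‖ = ‖g x‖ := fun x => by
    rw [← sq_eq_sq₀ (norm_nonneg _) (norm_nonneg _), apply_norm_sq_eq_inner_adjoint_left,
      apply_norm_sq_eq_inner_adjoint_left]
    exact congrArg (fun T : V →L[𝕜] V => RCLike.re (inner 𝕜 (T x) x)) h
  obtain ⟨W, hW⟩ := LinearMap.exists_linearIsometry_comp_eq (f := (f : V →ₗ[𝕜] V)) (g := g) hnorm
  let e := W.toLinearIsometryEquiv rfl
  refine ⟨_, (Unitary.linearIsometryEquiv.symm e).2, ?_⟩
  ext x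
  exact (hW x).symm

end ContinuousLinearMap

open scoped ComplexOrder

namespace Matrix
variable {𝕜 n : Type*} [RCLike 𝕜] [Fintype n] [DecidableEq n]

theorem exists_mem_unitaryGroup_mul_eq_of_conjTranspose_mul_self_eq {A B : Matrix n n 𝕜}
    (h : Aᴴ * A = Bᴴ * B) : ∃ W ∈ unitaryGroup n 𝕜, B = W * A := by
  let φ := toEuclideanCLM (n := n) (𝕜 := 𝕜)
  obtain ⟨u, hu, hBu⟩ := ContinuousLinearMap.exists_mem_unitary_mul_eq_of_star_mul_self_eq
    (f := φ A) (g := φ B) <| by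
      rw [← map_star, ← map_mul, ← map_star, ← map_mul]; exact congrArg φ h
  refine ⟨φ.symm u, Unitary.map_mem φ.symm hu, φ.injective ?_⟩
  change φ B = φ (φ.symm u * A)
  rw [map_mul, φ.apply_symm_apply, hBu]

variable {A : Matrix n n 𝕜}

theorem IsHermitian.trace_cfc (hA : A.IsHermitian) (f : ℝ → ℝ) :
    (cfc f A).trace = ∑ i, (f (hA.eigenvalues i) : 𝕜) := by
  rw [cfc_eq hA f, IsHermitian.cfc, Unitary.conjStarAlgAut_apply, trace_mul_cycle,
    Unitary.coe_star_mul_self, one_mul, trace_diagonal]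
  rfl

theorem IsHermitian.eigenvalues_le_one (hA : A.IsHermitian) (h : (1 - A).PosSemidef) (i : n) :
    hA.eigenvalues i ≤ 1 := by
  have hv : RCLike.re (star ⇑(hA.eigenvectorBasis i) ⬝ᵥ ⇑(hA.eigenvectorBasis i)) = 1 := by
    rw [dotProduct_comm, ← EuclideanSpace.inner_eq_star_dotProduct, inner_self_eq_norm_sq,
      hA.eigenvectorBasis.orthonormal.1 i, one_pow]
  have := h.re_dotProduct_nonneg (hA.eigenvectorBasis i)
  rw [sub_mulVec, one_mulVec, dotProduct_sub, map_sub, hv, ← hA.eigenvalues_eq i] at this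
  linarith

theorem PosSemidef.cfc_sqrt_mul_self (hA : A.PosSemidef) :
    cfc Real.sqrt A * cfc Real.sqrt A = A := by
  have : IsSelfAdjoint A := hA.1
  rw [← cfc_mul Real.sqrt Real.sqrt A]
  conv_rhs => rw [← cfc_id' ℝ A]
  refine cfc_congr fun x hx => ?_
  rw [hA.1.spectrum_real_eq_range_eigenvalues] at hx
  obtain ⟨i, rfl⟩ := hx
  exact Real.mul_self_sqrt (hA.eigenvalues_nonneg i)

theorem posSemidef_transpose_mul_self {l m : Type*} [Fintype l] [Finite m] (M : Matrix l m ℝ) :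
    (Mᵀ * M).PosSemidef := by
  simpa only [conjTranspose_eq_transpose_of_trivial] using posSemidef_conjTranspose_mul_self M

theorem exists_orthogonal_trace_mul_eq_trace_cfc_sqrt (M : Matrix n n ℝ) :
    ∃ O : Matrix n n ℝ, Oᵀ * O = 1 ∧ (M * O).trace = (cfc Real.sqrt (Mᵀ * M)).trace := by
  have hG : (Mᵀ * M).PosSemidef := posSemidef_transpose_mul_self M
  have hS : (cfc Real.sqrt (Mᵀ * M)).IsHermitian :=
    (cfc_predicate Real.sqrt (Mᵀ * M)).isHermitian
  obtain ⟨W, hW, hMW⟩ := exists_mem_unitaryGroup_mul_eq_of_conjTranspose_mul_self_eq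
    (A := cfc Real.sqrt (Mᵀ * M)) (B := M) <| by
      rw [hS.eq, hG.cfc_sqrt_mul_self, conjTranspose_eq_transpose_of_trivial]
  refine ⟨Wᵀ, by rw [transpose_transpose]; exact mem_unitaryGroup_iff.1 hW, ?_⟩
  have hWtW : Wᵀ * W = 1 := mem_unitaryGroup_iff'.1 hW
  conv_lhs => rw [hMW, trace_mul_cycle, hWtW, Matrix.one_mul]

end Matrix

theorem two_mul_one_sub_sqrt_le {x : ℝ} (hx : 0 ≤ x) :
    2 * (1 - √x) ≤ (1 - x) + (1 - x) ^ 2 := by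
  obtain ⟨s, hs, rfl⟩ : ∃ s, 0 ≤ s ∧ x = s ^ 2 := ⟨√x, Real.sqrt_nonneg x, (Real.sq_sqrt hx).symm⟩
  rw [Real.sqrt_sq hs]
  -- the difference is `(1 - s)² ((1 + s)² - 1)`
  nlinarith [mul_nonneg (sq_nonneg (1 - s)) (mul_nonneg hs (by linarith : (0 : ℝ) ≤ 2 + s))]

theorem two_mul_sum_one_sub_sqrt_le {ι : Type*} (s : Finset ι) {x : ι → ℝ}
    (h0 : ∀ i ∈ s, 0 ≤ x i) (h1 : ∀ i ∈ s, x i ≤ 1) :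
    2 * ∑ i ∈ s, (1 - √(x i)) ≤ ∑ i ∈ s, (1 - x i) + (∑ i ∈ s, (1 - x i)) ^ 2 := by
  calc 2 * ∑ i ∈ s, (1 - √(x i)) ≤ ∑ i ∈ s, ((1 - x i) + (1 - x i) ^ 2) := by
        rw [Finset.mul_sum]
        exact Finset.sum_le_sum fun i hi => two_mul_one_sub_sqrt_le (h0 i hi)
    _ ≤ ∑ i ∈ s, (1 - x i) + (∑ i ∈ s, (1 - x i)) ^ 2 := by
        rw [Finset.sum_add_distrib]
        gcongr
        exact Finset.sum_sq_le_sq_sum_of_nonneg fun i hi => sub_nonneg.2 (h1 i hi)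

section Frobenius
variable {m k n r : ℕ}

theorem frob_sq (A : Matrix (Fin m) (Fin k) ℝ) : frob A ^ 2 = (Aᵀ * A).trace := by
  rw [frob, Real.sq_sqrt (by positivity), Finset.sum_comm]
  simp only [trace, diag_apply, mul_apply, transpose_apply, sq]

theorem frob_sub_sq (A B : Matrix (Fin m) (Fin k) ℝ) :
    frob (A - B) ^ 2 = frob A ^ 2 + frob B ^ 2 - 2 * (Aᵀ * B).trace := by
  have : (Bᵀ * A).trace = (Aᵀ * B).trace := by
    rw [← trace_transpose, transpose_mul, transpose_transpose]
  rw [frob_sq, frob_sq, frob_sq, transpose_sub, Matrix.sub_mul, Matrix.mul_sub, Matrix.mul_sub,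
    trace_sub, trace_sub, trace_sub, this]
  ring

variable {U V : Matrix (Fin n) (Fin r) ℝ}

theorem frob_sq_of_transpose_mul_self_eq_one (hU : Uᵀ * U = 1) : frob U ^ 2 = r := by
  simp [frob_sq, hU]

theorem frob_mul_transpose_sq_of_transpose_mul_self_eq_one (hU : Uᵀ * U = 1) :
    frob (U * Uᵀ) ^ 2 = r := by
  rw [frob_sq, transpose_mul, transpose_transpose, Matrix.mul_assoc, ← Matrix.mul_assoc Uᵀ,
    hU, Matrix.one_mul, trace_mul_comm, hU]
  simp

theorem frob_sub_sq_of_transpose_mul_self_eq_one (hU : Uᵀ * U = 1) (hV : Vᵀ * V = 1) :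
    frob (U - V) ^ 2 = 2 * (r - (Uᵀ * V).trace) := by
  rw [frob_sub_sq, frob_sq_of_transpose_mul_self_eq_one hU, frob_sq_of_transpose_mul_self_eq_one hV]
  ring

theorem frob_mul_transpose_sub_mul_transpose_sq (hU : Uᵀ * U = 1) (hV : Vᵀ * V = 1) :
    frob (U * Uᵀ - V * Vᵀ) ^ 2 = 2 * (r - ((Uᵀ * V)ᵀ * (Uᵀ * V)).trace) := by
  have : ((U * Uᵀ)ᵀ * (V * Vᵀ)).trace = ((Uᵀ * V)ᵀ * (Uᵀ * V)).trace := by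
    simp only [transpose_mul, transpose_transpose, ← Matrix.mul_assoc]
    rw [trace_mul_cycle]
    simp only [Matrix.mul_assoc]
  rw [frob_sub_sq, frob_mul_transpose_sq_of_transpose_mul_self_eq_one hU,
    frob_mul_transpose_sq_of_transpose_mul_self_eq_one hV, this]
  ring

theorem posSemidef_one_sub_transpose_mul_self_transpose_mul (hU : Uᵀ * U = 1)
    (hV : Vᵀ * V = 1) : (1 - (Uᵀ * V)ᵀ * (Uᵀ * V)).PosSemidef := by
  have h : 1 - (Uᵀ * V)ᵀ * (Uᵀ * V) = (V - U * (Uᵀ * V))ᵀ * (V - U * (Uᵀ * V)) := by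
    simp only [transpose_sub, transpose_mul, transpose_transpose, Matrix.sub_mul, Matrix.mul_sub,
      Matrix.mul_assoc, hV]
    rw [← Matrix.mul_assoc Uᵀ U, hU, Matrix.one_mul]
    abel
  rw [h, ← conjTranspose_eq_transpose_of_trivial]
  exact posSemidef_conjTranspose_mul_self _

theorem dfDist_sq_le {O : Matrix (Fin r) (Fin r) ℝ} (hO : Oᵀ * O = 1) :
    dfDist U V ^ 2 ≤ frob (U - V * O) ^ 2 := by
  set T := {t | ∃ O : Matrix (Fin r) (Fin r) ℝ, Oᵀ * O = 1 ∧ t = frob (U - V * O)}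
  have hT : ∀ t ∈ T, 0 ≤ t := by rintro _ ⟨O, -, rfl⟩; exact Real.sqrt_nonneg _
  have hmem : frob (U - V * O) ∈ T := ⟨O, hO, rfl⟩
  exact pow_le_pow_left₀ (le_csInf ⟨_, hmem⟩ hT) (csInf_le ⟨0, hT⟩ hmem) 2

end Frobenius

/-- `d_f²(U,U*) ≤ ½‖UUᵀ − U*U*ᵀ‖_F² + ¼‖UUᵀ − U*U*ᵀ‖_F⁴`. -/
theorem stmt10 {n r : ℕ} (U Ustar : Matrix (Fin n) (Fin r) ℝ)
    (hU : Uᵀ * U = 1) (hUs : Ustarᵀ * Ustar = 1) :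
    dfDist U Ustar ^ 2 ≤
      (1 / 2) * frob (U * Uᵀ - Ustar * Ustarᵀ) ^ 2 +
        (1 / 4) * frob (U * Uᵀ - Ustar * Ustarᵀ) ^ 4 := by
  set M := Uᵀ * Ustar
  have hG : (Mᵀ * M).PosSemidef := posSemidef_transpose_mul_self M
  set μ := hG.1.eigenvalues
  have hproj : frob (U * Uᵀ - Ustar * Ustarᵀ) ^ 2 = 2 * ∑ i, (1 - μ i) := by
    rw [frob_mul_transpose_sub_mul_transpose_sq hU hUs, hG.1.trace_eq_sum_eigenvalues,
      Finset.sum_sub_distrib]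
    simp [μ]
  obtain ⟨O, hO, hMO⟩ := exists_orthogonal_trace_mul_eq_trace_cfc_sqrt M
  have hUsO : (Ustar * O)ᵀ * (Ustar * O) = 1 := by
    rw [transpose_mul, Matrix.mul_assoc, ← Matrix.mul_assoc Ustarᵀ, hUs, Matrix.one_mul, hO]
  calc dfDist U Ustar ^ 2 ≤ frob (U - Ustar * O) ^ 2 := dfDist_sq_le hO
    _ = 2 * ∑ i, (1 - √(μ i)) := by
      rw [frob_sub_sq_of_transpose_mul_self_eq_one hU hUsO, ← Matrix.mul_assoc, hMO,
        hG.1.trace_cfc, Finset.sum_sub_distrib]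
      simp [μ]
    _ ≤ ∑ i, (1 - μ i) + (∑ i, (1 - μ i)) ^ 2 :=
      two_mul_sum_one_sub_sqrt_le _ (fun i _ => hG.eigenvalues_nonneg i) fun i _ =>
        hG.1.eigenvalues_le_one (posSemidef_one_sub_transpose_mul_self_transpose_mul hU hUs) i
    _ = _ := by rw [show (4 : ℕ) = 2 * 2 from rfl, pow_mul, hproj]; ring
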